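/- Let {S_i}_{i∈I} be an inverse system of spectral topological spaces over a directed partially ordered set I, with quasi-compact surjective continuous transition maps. Then the inverse limit S = lim_i S_i (with the subspace topology from the product ∏_i S_i) is a spectral space. -/

import Mathlib

/-- A topological space is *spectral* if it is quasi-compact, T0, sober (every nonempty
irreducible closed subset has a unique generic point; with T0, `QuasiSober` gives exactly
this), and the quasi-compact open subsets are stable under finite intersections and form a
basis for the topology. -/
def IsSpectralSpace (X : Type*) [TopologicalSpace X] : Prop :=
  CompactSpace X ∧ T0Space X ∧ QuasiSober X ∧
    (∀ U V : Set X, IsOpen U → IsCompact U → IsOpen V → IsCompact V → IsCompact (U ∩ V)) ∧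
    TopologicalSpace.IsTopologicalBasis {U : Set X | IsOpen U ∧ IsCompact U}

/-!
The constructible topology of a spectral space, generated by the quasi-compact opens and their
complements, is compact Hausdorff, and spectral maps remain continuous for it. Computed with these
topologies, the limit is a closed subspace of a compact Hausdorff product, hence compact; it maps
continuously and bijectively onto `lim S i`, and the sets `prᵢ⁻¹ U` (`U` quasi-compact open) are
closed in it, so they are quasi-compact in `lim S i`. By directedness these sets form a basis
stable under finite intersections. For sobriety, the generic points of the closures of the
projections of an irreducible closed set are compatible and assemble into its generic point.
-/

open Topology TopologicalSpace Set

theorem isSpectralSpace_iff_spectralSpace {X : Type*} [TopologicalSpace X] :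
    IsSpectralSpace X ↔ SpectralSpace X :=
  ⟨fun ⟨_, _, _, hinter, hbasis⟩ =>
    have : QuasiSeparatedSpace X := ⟨hinter⟩
    have : PrespectralSpace X := ⟨hbasis⟩
    {},
   fun _ => ⟨inferInstance, inferInstance, inferInstance, QuasiSeparatedSpace.inter_isCompact,
    PrespectralSpace.isTopologicalBasis⟩⟩

section ConstructibleTopology

variable {X Y : Type*} [TopologicalSpace X] [TopologicalSpace Y]

open WithTopology

theorem WithConstructibleTopology.isClopen_preimage_ofTopology {U : Set X} (hUo : IsOpen U)
    (hUc : IsCompact U) : IsClopen (ofTopology ⁻¹' U : Set (WithConstructibleTopology X)) :=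
  ⟨isOpen_compl_iff.mp <| IsCompact.isOpen_constructibleTopology_of_isClosed (s := Uᶜ)
      (by rwa [compl_compl]) hUo.isClosed_compl,
    hUc.isOpen_constructibleTopology_of_isOpen hUo⟩

theorem WithConstructibleTopology.continuous_ofTopology [PrespectralSpace X] :
    Continuous (ofTopology : WithConstructibleTopology X → X) :=
  PrespectralSpace.isTopologicalBasis.continuous_iff.mpr fun _ ⟨hUo, hUc⟩ =>
    (isClopen_preimage_ofTopology hUo hUc).isOpen

theorem IsSpectralMap.continuous_withConstructibleTopology {f : X → Y} (hf : IsSpectralMap f) :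
    Continuous fun x : WithConstructibleTopology X =>
      toTopology (constructibleTopology Y) (f x.ofTopology) := by
  have h : Continuous[_, constructibleTopology Y] fun x : WithConstructibleTopology X =>
      f x.ofTopology := by
    refine continuous_generateFrom_iff.mpr ?_
    rintro s (⟨hso, hsc⟩ | ⟨hsc, hsc'⟩)
    · exact (WithConstructibleTopology.isClopen_preimage_ofTopology
        (hso.preimage hf.continuous) (hf.isCompact_preimage_of_isOpen hso hsc)).isOpen
    · rw [← compl_compl s, preimage_compl]
      exact (WithConstructibleTopology.isClopen_preimage_ofTopology
        (hsc.isOpen_compl.preimage hf.continuous)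
        (hf.isCompact_preimage_of_isOpen hsc.isOpen_compl hsc')).compl.isOpen
  exact continuous_def.mpr fun s hs => continuous_def.mp h _ hs

instance [T0Space X] [PrespectralSpace X] : T2Space (WithConstructibleTopology X) := by
  refine ⟨fun x y hxy => ?_⟩
  obtain ⟨C, hC, hxC, hyC⟩ :
      ∃ C : Set (WithConstructibleTopology X), IsClopen C ∧ x ∈ C ∧ y ∉ C := by
    obtain ⟨O, hO, hxor⟩ := exists_isOpen_xor_mem ((ofTopology_injective _).ne hxy)
    rcases hxor with ⟨hx, hy⟩ | ⟨hy, hx⟩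
    · obtain ⟨U, ⟨hUo, hUc⟩, hxU, hUO⟩ :=
        PrespectralSpace.isTopologicalBasis.exists_subset_of_mem_open hx hO
      exact ⟨_, WithConstructibleTopology.isClopen_preimage_ofTopology hUo hUc, hxU,
        fun hyU => hy (hUO hyU)⟩
    · obtain ⟨U, ⟨hUo, hUc⟩, hyU, hUO⟩ :=
        PrespectralSpace.isTopologicalBasis.exists_subset_of_mem_open hy hO
      exact ⟨_, (WithConstructibleTopology.isClopen_preimage_ofTopology hUo hUc).compl,
        fun hxU => hx (hUO hxU), not_not.mpr hyU⟩
  exact ⟨C, Cᶜ, hC.isOpen, hC.compl.isOpen, hxC, hyC, disjoint_compl_right⟩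

end ConstructibleTopology

section InverseLimit

variable {I : Type*} [Preorder I] (S : I → Type*) (p : ∀ {i j : I}, j ≤ i → S i → S j)

abbrev InverseLimit : Type _ := {x : ∀ i, S i // ∀ (i j : I) (h : j ≤ i), p h (x i) = x j}

variable {S p} in
theorem InverseLimit.preimage_apply_eq {i k : I} (h : i ≤ k) (U : Set (S i)) :
    (fun x : InverseLimit S p => x.1 i) ⁻¹' U =
      (fun x : InverseLimit S p => x.1 k) ⁻¹' (p h ⁻¹' U) := by
  ext x
  simp [x.2 k i h]

variable [∀ i, TopologicalSpace (S i)]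

theorem InverseLimit.compactSpace_of_t2 [∀ i, CompactSpace (S i)] [∀ i, T2Space (S i)]
    (hp : ∀ (i j : I) (h : j ≤ i), Continuous (p h)) : CompactSpace (InverseLimit S p) := by
  refine isCompact_iff_compactSpace.mp (IsClosed.isCompact ?_)
  show IsClosed {x : ∀ i, S i | ∀ (i j : I) (h : j ≤ i), p h (x i) = x j}
  simp only [ofPred_forall]
  exact isClosed_iInter fun i => isClosed_iInter fun j => isClosed_iInter fun h =>
    isClosed_eq ((hp i j h).comp (continuous_apply i)) (continuous_apply j)

abbrev constructibleTransition {i j : I} (h : j ≤ i) (y : WithConstructibleTopology (S i)) :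
    WithConstructibleTopology (S j) :=
  WithTopology.toTopology _ (p h y.ofTopology)

def InverseLimit.ofConstructible :
    InverseLimit (fun i => WithConstructibleTopology (S i)) (constructibleTransition S p) →
      InverseLimit S p :=
  fun y => ⟨fun i => (y.1 i).ofTopology, fun i j h => congrArg WithTopology.ofTopology (y.2 i j h)⟩

theorem InverseLimit.surjective_ofConstructible :
    Function.Surjective (InverseLimit.ofConstructible S p) :=
  fun x => ⟨⟨fun i => WithTopology.toTopology _ (x.1 i),
    fun i j h => congrArg (WithTopology.toTopology _) (x.2 i j h)⟩, rfl⟩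

theorem InverseLimit.continuous_ofConstructible [∀ i, PrespectralSpace (S i)] :
    Continuous (InverseLimit.ofConstructible S p) :=
  (continuous_pi fun i => WithConstructibleTopology.continuous_ofTopology.comp
    ((continuous_apply i).comp continuous_subtype_val)).subtype_mk _

variable [∀ i, SpectralSpace (S i)] {S p}

theorem InverseLimit.compactSpace (hp : ∀ (i j : I) (h : j ≤ i), IsSpectralMap (p h)) :
    CompactSpace (InverseLimit S p) :=
  have := compactSpace_of_t2 _ (constructibleTransition S p)
    fun i j h => (hp i j h).continuous_withConstructibleTopology
  (surjective_ofConstructible S p).compactSpace (continuous_ofConstructible S p)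

theorem InverseLimit.isCompact_preimage_apply (hp : ∀ (i j : I) (h : j ≤ i), IsSpectralMap (p h))
    {k : I} {U : Set (S k)} (hUo : IsOpen U) (hUc : IsCompact U) :
    IsCompact ((fun x : InverseLimit S p => x.1 k) ⁻¹' U) := by
  have := compactSpace_of_t2 _ (constructibleTransition S p)
    fun i j h => (hp i j h).continuous_withConstructibleTopology
  have hk : Continuous fun y : InverseLimit (fun i => WithConstructibleTopology (S i))
      (constructibleTransition S p) => y.1 k :=
    (continuous_apply k).comp continuous_subtype_val
  rw [← image_preimage_eq ((fun x : InverseLimit S p => x.1 k) ⁻¹' U)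
    (surjective_ofConstructible S p)]
  exact (((WithConstructibleTopology.isClopen_preimage_ofTopology hUo hUc).isClosed.preimage
    hk).isCompact).image (continuous_ofConstructible S p)

section Directed

variable [Nonempty I] [IsDirectedOrder I]

theorem InverseLimit.isTopologicalBasis (hp : ∀ (i j : I) (h : j ≤ i), IsSpectralMap (p h)) :
    IsTopologicalBasis (range fun U : Σ k, CompactOpens (S k) =>
      (fun x : InverseLimit S p => x.1 U.1) ⁻¹' U.2) := by
  refine (isTopologicalBasis_subtype (isTopologicalBasis_pi fun i =>
    PrespectralSpace.isTopologicalBasis) _).of_isOpen_of_subset ?_ ?_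
  · rintro _ ⟨⟨k, U⟩, rfl⟩
    exact U.isOpen.preimage ((continuous_apply k).comp continuous_subtype_val)
  · rintro _ ⟨_, ⟨U, F, hU, rfl⟩, rfl⟩
    obtain ⟨k, hk⟩ := F.exists_le
    let W : Set (S k) := ⋂ i : F, p (hk i i.2) ⁻¹' U i
    have hWo : IsOpen W :=
      isOpen_iInter_of_finite fun i => (hU i i.2).1.preimage (hp k i _).continuous
    have hWc : IsCompact W := by
      simp only [W, ← sInter_range]
      refine QuasiSeparatedSpace.isCompact_sInter (finite_range _) ?_ ?_
      · rintro _ ⟨i, rfl⟩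
        exact .inl ((hU i i.2).1.preimage (hp k i _).continuous)
      · rintro _ ⟨i, rfl⟩
        exact (hp k i _).isCompact_preimage_of_isOpen (hU i i.2).1 (hU i i.2).2
    refine ⟨⟨k, ⟨⟨W, hWc⟩, hWo⟩⟩, ?_⟩
    ext x
    simp [W, x.2 k _ (hk _ _)]

theorem InverseLimit.quasiSeparatedSpace (hp : ∀ (i j : I) (h : j ≤ i), IsSpectralMap (p h)) :
    QuasiSeparatedSpace (InverseLimit S p) := by
  refine .of_isTopologicalBasis (isTopologicalBasis hp) fun ⟨i, U⟩ ⟨j, V⟩ => ?_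
  obtain ⟨k, hik, hjk⟩ := exists_ge_ge i j
  have hUo := U.isOpen.preimage (hp k i hik).continuous
  have hVo := V.isOpen.preimage (hp k j hjk).continuous
  simp only [preimage_apply_eq hik, preimage_apply_eq hjk, ← preimage_inter]
  exact isCompact_preimage_apply hp (hUo.inter hVo)
    (((hp k i hik).isCompact_preimage_of_isOpen U.isOpen U.isCompact).inter_of_isOpen
      ((hp k j hjk).isCompact_preimage_of_isOpen V.isOpen V.isCompact) hUo hVo)

theorem InverseLimit.prespectralSpace (hp : ∀ (i j : I) (h : j ≤ i), IsSpectralMap (p h)) :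
    PrespectralSpace (InverseLimit S p) :=
  .of_isTopologicalBasis' (isTopologicalBasis hp) fun ⟨_, U⟩ =>
    isCompact_preimage_apply hp U.isOpen U.isCompact

theorem InverseLimit.mem_closure_iff (hp : ∀ (i j : I) (h : j ≤ i), IsSpectralMap (p h))
    {T : Set (InverseLimit S p)} {z : InverseLimit S p} :
    z ∈ closure T ↔ ∀ i, z.1 i ∈ closure ((fun x : InverseLimit S p => x.1 i) '' T) := by
  refine ⟨fun hz i => map_mem_closure ((continuous_apply i).comp continuous_subtype_val) hz
    (mapsTo_image _ T), fun hz => (isTopologicalBasis hp).mem_closure_iff.mpr ?_⟩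
  rintro _ ⟨⟨k, U⟩, rfl⟩ hzU
  obtain ⟨_, hU, x, hxT, rfl⟩ := _root_.mem_closure_iff.mp (hz k) U U.isOpen hzU
  exact ⟨x, hU, hxT⟩

theorem InverseLimit.quasiSober (hp : ∀ (i j : I) (h : j ≤ i), IsSpectralMap (p h)) :
    QuasiSober (InverseLimit S p) where
  sober {T} hT hTc := by
    let π i := fun x : InverseLimit S p => x.1 i
    have hTi i : IsIrreducible (closure (π i '' T)) :=
      (hT.image _ ((continuous_apply i).comp continuous_subtype_val).continuousOn).closure
    let g i := (hTi i).genericPoint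
    have hg i : IsGenericPoint (g i) (closure (π i '' T)) :=
      (hTi i).isGenericPoint_genericPoint isClosed_closure
    have hcompat i j (h : j ≤ i) : p h (g i) = g j := by
      refine ((hg i).image (hp i j h).continuous).eq ?_
      rw [closure_image_closure (hp i j h).continuous, image_image]
      convert hg j using 3 with x
      exact x.2 i j h
    refine ⟨⟨g, hcompat⟩, isGenericPoint_iff_specializes.mpr fun z => ?_⟩
    refine IsInducing.subtypeVal.specializes_iff.symm.trans ?_
    rw [specializes_pi, ← hTc.closure_eq, mem_closure_iff hp]
    exact forall_congr' fun i => (hg i).specializes_iff_mem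

end Directed

theorem InverseLimit.spectralSpace [IsDirectedOrder I]
    (hp : ∀ (i j : I) (h : j ≤ i), IsSpectralMap (p h)) : SpectralSpace (InverseLimit S p) := by
  cases isEmpty_or_nonempty I
  · have : Subsingleton (InverseLimit S p) := ⟨fun x y => Subtype.ext (funext isEmptyElim)⟩
    exact {}
  · have := compactSpace hp
    have := quasiSober hp
    have := quasiSeparatedSpace hp
    have := prespectralSpace hp
    exact {}

end InverseLimit

theorem stmt_5_general {I : Type*} [PartialOrder I] [IsDirected I (· ≤ ·)]
    (S : I → Type*) [∀ i, TopologicalSpace (S i)]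
    (p : ∀ {i j : I}, j ≤ i → S i → S j)
    (hcont : ∀ (i j : I) (h : j ≤ i), Continuous (p h))
    (hspectral : ∀ i : I, IsSpectralSpace (S i))
    (hqc : ∀ (i j : I) (h : j ≤ i) (U : Set (S j)), IsOpen U → IsCompact U →
      IsCompact (p h ⁻¹' U)) :
    IsSpectralSpace {x : ∀ i, S i // ∀ (i j : I) (h : j ≤ i), p h (x i) = x j} := by
  have := fun i => isSpectralSpace_iff_spectralSpace.mp (hspectral i)
  exact isSpectralSpace_iff_spectralSpace.mpr
    (InverseLimit.spectralSpace fun i j h => ⟨hcont i j h, hqc i j h⟩)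

/-- Let `{S i}` be an inverse system of spectral spaces over a directed
partially ordered set `I`, with quasi-compact surjective continuous transition maps
`p : S i → S j` (for `j ≤ i`).  Then the inverse limit `S = lim_i S i`, topologized as a
subspace of the product `∀ i, S i`, is a spectral space. -/
theorem stmt_5 {I : Type*} [PartialOrder I] [IsDirected I (· ≤ ·)]
    (S : I → Type*) [∀ i, TopologicalSpace (S i)]
    (p : ∀ {i j : I}, j ≤ i → S i → S j)
    (hp_id : ∀ (i : I) (x : S i), p (le_refl i) x = x)
    (hp_comp : ∀ {i j k : I} (hij : j ≤ i) (hjk : k ≤ j) (x : S i),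
      p hjk (p hij x) = p (hjk.trans hij) x)
    (hcont : ∀ (i j : I) (h : j ≤ i), Continuous (p h))
    (hspectral : ∀ i : I, IsSpectralSpace (S i))
    (hqc : ∀ (i j : I) (h : j ≤ i) (U : Set (S j)), IsOpen U → IsCompact U →
      IsCompact (p h ⁻¹' U))
    (hsurj : ∀ (i j : I) (h : j ≤ i), Function.Surjective (p h)) :
    IsSpectralSpace {x : ∀ i, S i // ∀ (i j : I) (h : j ≤ i), p h (x i) = x j} :=
  stmt_5_general S p hcont hspectral hqc
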